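/- arXiv:2107.03003 — 5 statements merged into one kernel-verified Lean document; each statement's English description precedes it below -/
import Mathlib

section
/- Let J ≥ 1, let B_1, …, B_J be positive definite real T×T matrices and z_1, …, z_J ∈ ℝ^T. Then (∑_{l=1}^J z_l)ᵀ (∑_{l=1}^J B_l)⁻¹ (∑_{l=1}^J z_l) ≤ ∑_{l=1}^J z_lᵀ B_l⁻¹ z_l. (This is the core inequality behind Theorem 'reduced variance': the double sum ∑_{i,j} z_iᵀ(∑_l B_l)⁻¹ z_j equals the left-hand side.) -/
/-!
For a positive definite `B`, the form `z ⬝ᵥ B⁻¹ z` is the maximum over `y` of the concave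
objective `2 y ⬝ᵥ z - y ⬝ᵥ B y`, attained at `y = B⁻¹ z`. The objective is additive in the pair
`(B, z)`, so evaluating it for `(∑ B, ∑ z)` at its maximiser `y = (∑ B)⁻¹ (∑ z)` and bounding
each summand by its own maximum gives the inequality.
-/

open Matrix BigOperators

namespace Matrix

variable {n : Type*} [Fintype n]

def quadObjective (B : Matrix n n ℝ) (z y : n → ℝ) : ℝ :=
  2 * (y ⬝ᵥ z) - y ⬝ᵥ (B *ᵥ y)

theorem quadObjective_sum {ι : Type*} (s : Finset ι) (B : ι → Matrix n n ℝ) (z : ι → n → ℝ)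
    (y : n → ℝ) :
    quadObjective (∑ l ∈ s, B l) (∑ l ∈ s, z l) y = ∑ l ∈ s, quadObjective (B l) (z l) y := by
  simp only [quadObjective, sum_mulVec, dotProduct_sum, Finset.mul_sum, Finset.sum_sub_distrib]

/-- When `B` is singular both sides vanish, since then `B⁻¹ = 0`. -/
theorem quadObjective_nonsing_inv_mulVec [DecidableEq n] (B : Matrix n n ℝ) (z : n → ℝ) :
    quadObjective B z (B⁻¹ *ᵥ z) = z ⬝ᵥ (B⁻¹ *ᵥ z) := by
  by_cases hB : IsUnit B.det
  · rw [quadObjective, mulVec_mulVec, mul_nonsing_inv B hB, one_mulVec, dotProduct_comm]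
    ring
  · simp [quadObjective, nonsing_inv_apply_not_isUnit B hB]

theorem PosDef.quadObjective_le [DecidableEq n] {B : Matrix n n ℝ} (hB : B.PosDef)
    (z y : n → ℝ) : quadObjective B z y ≤ z ⬝ᵥ (B⁻¹ *ᵥ z) := by
  set x := B⁻¹ *ᵥ z
  have hBx : B *ᵥ x = z := by
    rw [mulVec_mulVec, mul_nonsing_inv B hB.det_pos.ne'.isUnit, one_mulVec]
  have hsymm : x ⬝ᵥ (B *ᵥ y) = y ⬝ᵥ (B *ᵥ x) := by
    rw [dotProduct_mulVec, ← mulVec_transpose, (isHermitian_iff_isSymm.mp hB.1).eq,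
      dotProduct_comm]
  -- the gap between the two sides is `(x - y) ⬝ᵥ B (x - y)`
  have hgap := hB.posSemidef.dotProduct_mulVec_nonneg (x - y)
  simp only [star_trivial, mulVec_sub, sub_dotProduct, dotProduct_sub, hsymm, hBx] at hgap
  rw [quadObjective, dotProduct_comm z]
  linarith

end Matrix

theorem sum_quadratic_form_inv_le_general {T J : ℕ}
    (B : Fin J → Matrix (Fin T) (Fin T) ℝ) (hB : ∀ l, (B l).PosDef)
    (z : Fin J → (Fin T → ℝ)) :
    (∑ l, z l) ⬝ᵥ ((∑ l, B l)⁻¹ *ᵥ (∑ l, z l)) ≤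
      ∑ l, z l ⬝ᵥ ((B l)⁻¹ *ᵥ z l) := by
  rw [← quadObjective_nonsing_inv_mulVec, quadObjective_sum]
  exact Finset.sum_le_sum fun l _ => (hB l).quadObjective_le _ _

/-- Core Jensen-type inequality behind the reduced-variance theorem:
for positive definite matrices `B l` and vectors `z l`,
`(∑ z)ᵀ (∑ B)⁻¹ (∑ z) ≤ ∑ zᵀ B⁻¹ z`. -/
theorem sum_quadratic_form_inv_le {T J : ℕ} (hJ : 1 ≤ J)
    (B : Fin J → Matrix (Fin T) (Fin T) ℝ) (hB : ∀ l, (B l).PosDef)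
    (z : Fin J → (Fin T → ℝ)) :
    (∑ l, z l) ⬝ᵥ ((∑ l, B l)⁻¹ *ᵥ (∑ l, z l)) ≤
      ∑ l, z l ⬝ᵥ ((B l)⁻¹ *ᵥ z l) :=
  sum_quadratic_form_inv_le_general B hB z
end

section
/- (Theorem: decomposed GP regression has smaller variance.) With the decomposed-kernel setup, suppose each K_{j,T} is symmetric positive definite and each D_j is invertible (i.e. g_j(x_t) ≠ 0 for all t, j). Then the variance of decomposed GP regression is at most the variance of standard GP regression with the composed kernel: σ²_{T,decomp}(x) = ∑_{j=1}^J g_j(x)² (k_j(x,x) − k_{j,T}(x)ᵀ K_{j,T}⁻¹ k_{j,T}(x)) ≤ k(x,x) − k_T(x)ᵀ K_T⁻¹ k_T(x) = σ²_{T,entire}(x). -/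
open Matrix BigOperators

/-- The noisy kernel matrix `K_{j,T}` of the `j`-th decomposed component. -/
noncomputable def Kmat {X : Type*} {T J : ℕ} (kj : Fin J → X → X → ℝ)
    (sj : Fin J → X → ℝ) (xs : Fin T → X) (j : Fin J) : Matrix (Fin T) (Fin T) ℝ :=
  Matrix.of (fun s t => kj j (xs s) (xs t)) + Matrix.diagonal (fun t => sj j (xs t))

/-- The diagonal weight matrix `D_j = diag(g_j(x_1), …, g_j(x_T))`. -/
noncomputable def Dmat {X : Type*} {T J : ℕ} (gj : Fin J → X → ℝ)
    (xs : Fin T → X) (j : Fin J) : Matrix (Fin T) (Fin T) ℝ :=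
  Matrix.diagonal (fun t => gj j (xs t))

/-- The composed kernel `k(x,x') = ∑ j, g_j(x) k_j(x,x') g_j(x')`. -/
noncomputable def kComp {X : Type*} {J : ℕ} (kj : Fin J → X → X → ℝ)
    (gj : Fin J → X → ℝ) (x x' : X) : ℝ :=
  ∑ j, gj j x * kj j x x' * gj j x'

/-- The composed noise variance `σ²(x) = ∑ j, g_j(x)² σ_j²(x)`. -/
noncomputable def sComp {X : Type*} {J : ℕ} (gj : Fin J → X → ℝ)
    (sj : Fin J → X → ℝ) (x : X) : ℝ :=
  ∑ j, (gj j x) ^ 2 * sj j x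

/-- The composed noisy kernel matrix `K_T`. -/
noncomputable def KmatComp {X : Type*} {T J : ℕ} (kj : Fin J → X → X → ℝ)
    (gj : Fin J → X → ℝ) (sj : Fin J → X → ℝ) (xs : Fin T → X) :
    Matrix (Fin T) (Fin T) ℝ :=
  Matrix.of (fun s t => kComp kj gj (xs s) (xs t)) +
    Matrix.diagonal (fun t => sComp gj sj (xs t))

/-- The vector `k_{j,T}(x) = (k_j(x_1,x), …, k_j(x_T,x))ᵀ`. -/
def kvec {X : Type*} {T J : ℕ} (kj : Fin J → X → X → ℝ) (xs : Fin T → X)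
    (j : Fin J) (x : X) : Fin T → ℝ :=
  fun t => kj j (xs t) x

/-- The vector `k_T(x) = (k(x_1,x), …, k(x_T,x))ᵀ` of the composed kernel. -/
noncomputable def kvecComp {X : Type*} {T J : ℕ} (kj : Fin J → X → X → ℝ)
    (gj : Fin J → X → ℝ) (xs : Fin T → X) (x : X) : Fin T → ℝ :=
  fun t => kComp kj gj (xs t) x

/-- The vector `z_j = g_j(x) · D_j k_{j,T}(x)`. -/
noncomputable def zvec {X : Type*} {T J : ℕ} (kj : Fin J → X → X → ℝ)
    (gj : Fin J → X → ℝ) (xs : Fin T → X) (j : Fin J) (x : X) : Fin T → ℝ :=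
  gj j x • (Dmat gj xs j *ᵥ kvec kj xs j x)

/-! The composed Gram matrix is `K_T = ∑ j, D_jᵀ K_{j,T} D_j` and `k_T(x) = ∑ j, z_j`, while
`z_jᵀ (D_jᵀ K_{j,T} D_j)⁻¹ z_j = g_j(x)² k_{j,T}(x)ᵀ K_{j,T}⁻¹ k_{j,T}(x)`. So the claim is the joint
subadditivity `(∑ z_j)ᵀ (∑ A_j)⁻¹ (∑ z_j) ≤ ∑ z_jᵀ A_j⁻¹ z_j` over positive definite `A_j`. It follows
from the variational formula `zᵀ A⁻¹ z = max_w (2 wᵀ z - wᵀ A w)`: evaluate every term on the right at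
the maximiser `w = (∑ A_j)⁻¹ (∑ z_j)` of the left-hand side. -/

namespace Matrix

variable {n : Type*} [Fintype n] [DecidableEq n]

theorem PosDef.two_mul_dotProduct_sub_le_dotProduct_inv_mulVec {A : Matrix n n ℝ}
    (hA : A.PosDef) (z w : n → ℝ) :
    2 * (w ⬝ᵥ z) - w ⬝ᵥ (A *ᵥ w) ≤ z ⬝ᵥ (A⁻¹ *ᵥ z) := by
  have hdet : IsUnit A.det := (isUnit_iff_isUnit_det A).mp hA.isUnit
  obtain ⟨u, rfl⟩ : ∃ u, z = A *ᵥ u :=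
    ⟨A⁻¹ *ᵥ z, by rw [mulVec_mulVec, mul_nonsing_inv _ hdet, one_mulVec]⟩
  rw [mulVec_mulVec, nonsing_inv_mul _ hdet, one_mulVec]
  have hAt : Aᵀ = A := by simpa using hA.isHermitian.eq
  have hsymm : u ⬝ᵥ (A *ᵥ w) = w ⬝ᵥ (A *ᵥ u) := by
    rw [dotProduct_mulVec, ← mulVec_transpose, hAt, dotProduct_comm]
  have hsq := hA.posSemidef.dotProduct_mulVec_nonneg (u - w)
  simp only [star_trivial, mulVec_sub, dotProduct_sub, sub_dotProduct] at hsq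
  linarith [dotProduct_comm (A *ᵥ u) u]

theorem dotProduct_sum_inv_mulVec_le {ι : Type*} (s : Finset ι) {A : ι → Matrix n n ℝ}
    (hA : ∀ i ∈ s, (A i).PosDef) (z : ι → n → ℝ) :
    (∑ i ∈ s, z i) ⬝ᵥ ((∑ i ∈ s, A i)⁻¹ *ᵥ ∑ i ∈ s, z i) ≤
      ∑ i ∈ s, z i ⬝ᵥ ((A i)⁻¹ *ᵥ z i) := by
  rcases s.eq_empty_or_nonempty with rfl | hs
  · simp
  set w := (∑ i ∈ s, A i)⁻¹ *ᵥ ∑ i ∈ s, z i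
  have hdet : IsUnit (∑ i ∈ s, A i).det :=
    (isUnit_iff_isUnit_det _).mp (posDef_sum hs hA).isUnit
  have hw : (∑ i ∈ s, A i) *ᵥ w = ∑ i ∈ s, z i := by
    rw [mulVec_mulVec, mul_nonsing_inv _ hdet, one_mulVec]
  calc (∑ i ∈ s, z i) ⬝ᵥ w = ∑ i ∈ s, (2 * (w ⬝ᵥ z i) - w ⬝ᵥ (A i *ᵥ w)) := by
        rw [Finset.sum_sub_distrib, ← Finset.mul_sum, ← dotProduct_sum, ← dotProduct_sum,
          ← sum_mulVec, hw, dotProduct_comm]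
        ring
    _ ≤ _ := Finset.sum_le_sum fun i hi =>
        (hA i hi).two_mul_dotProduct_sub_le_dotProduct_inv_mulVec _ _

theorem dotProduct_transpose_mul_mul_inv_mulVec {α : Type*} [CommRing α] {B : Matrix n n α}
    (hB : IsUnit B.det) (K : Matrix n n α) (k : n → α) :
    (Bᵀ *ᵥ k) ⬝ᵥ ((Bᵀ * K * B)⁻¹ *ᵥ (Bᵀ *ᵥ k)) = k ⬝ᵥ (K⁻¹ *ᵥ k) := by
  have hk : Bᵀ⁻¹ *ᵥ (Bᵀ *ᵥ k) = k := by
    rw [mulVec_mulVec, nonsing_inv_mul _ (isUnit_det_transpose B hB), one_mulVec]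
  rw [mul_inv_rev, mul_inv_rev, ← mulVec_mulVec, ← mulVec_mulVec, hk, dotProduct_mulVec,
    mulVec_transpose, vecMul_vecMul, mul_nonsing_inv _ hB, vecMul_one]

end Matrix

open Matrix

section GaussianProcess

variable {X : Type*} {T J : ℕ} (kj : Fin J → X → X → ℝ) (gj : Fin J → X → ℝ)
  (sj : Fin J → X → ℝ) (xs : Fin T → X)

theorem transpose_Dmat (j : Fin J) : (Dmat gj xs j)ᵀ = Dmat gj xs j :=
  diagonal_transpose _

theorem isUnit_det_Dmat {j : Fin J} (hD : ∀ t, gj j (xs t) ≠ 0) : IsUnit (Dmat gj xs j).det := by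
  rw [Dmat, det_diagonal, isUnit_iff_ne_zero]
  exact Finset.prod_ne_zero_iff.mpr fun t _ => hD t

theorem posDef_transpose_Dmat_mul_Kmat_mul_Dmat {j : Fin J} (hK : (Kmat kj sj xs j).PosDef)
    (hD : ∀ t, gj j (xs t) ≠ 0) :
    ((Dmat gj xs j)ᵀ * Kmat kj sj xs j * Dmat gj xs j).PosDef := by
  have hinj : Function.Injective (Dmat gj xs j).mulVec :=
    mulVec_injective_iff_isUnit.mpr ((isUnit_iff_isUnit_det _).mpr (isUnit_det_Dmat gj xs hD))
  simpa only [conjTranspose_eq_transpose_of_trivial] using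
    hK.conjTranspose_mul_mul_same hinj

theorem KmatComp_eq_sum :
    KmatComp kj gj sj xs = ∑ j, (Dmat gj xs j)ᵀ * Kmat kj sj xs j * Dmat gj xs j := by
  simp only [transpose_Dmat]
  ext s t
  simp only [KmatComp, kComp, sComp, Dmat, Kmat, Matrix.add_apply, Matrix.sum_apply, of_apply,
    mul_diagonal, diagonal_mul, diagonal_apply]
  split_ifs with hst
  · subst hst
    rw [← Finset.sum_add_distrib]
    exact Finset.sum_congr rfl fun j _ => by ring
  · simp

theorem zvec_eq (j : Fin J) (x : X) :
    zvec kj gj xs j x = (Dmat gj xs j)ᵀ *ᵥ (gj j x • kvec kj xs j x) := by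
  rw [transpose_Dmat, zvec, mulVec_smul]

theorem kvecComp_eq_sum (x : X) : kvecComp kj gj xs x = ∑ j, zvec kj gj xs j x := by
  ext t
  simp only [kvecComp, kComp, zvec, Dmat, kvec, Finset.sum_apply, Pi.smul_apply,
    mulVec_diagonal, smul_eq_mul]
  exact Finset.sum_congr rfl fun j _ => by ring

theorem dotProduct_zvec_inv_mulVec {j : Fin J} (hD : ∀ t, gj j (xs t) ≠ 0) (x : X) :
    zvec kj gj xs j x ⬝ᵥ
        (((Dmat gj xs j)ᵀ * Kmat kj sj xs j * Dmat gj xs j)⁻¹ *ᵥ zvec kj gj xs j x) =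
      gj j x ^ 2 * (kvec kj xs j x ⬝ᵥ ((Kmat kj sj xs j)⁻¹ *ᵥ kvec kj xs j x)) := by
  rw [zvec_eq, dotProduct_transpose_mul_mul_inv_mulVec (isUnit_det_Dmat gj xs hD), mulVec_smul,
    dotProduct_smul, smul_dotProduct, smul_eq_mul, smul_eq_mul]
  ring

theorem kComp_self (x : X) : kComp kj gj x x = ∑ j, gj j x ^ 2 * kj j x x :=
  Finset.sum_congr rfl fun j _ => by ring

end GaussianProcess

theorem decomposed_gp_variance_le_entire_general {X : Type*} {T J : ℕ}
    (kj : Fin J → X → X → ℝ) (gj : Fin J → X → ℝ) (sj : Fin J → X → ℝ)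
    (xs : Fin T → X) (x : X)
    (hK : ∀ j, (Kmat kj sj xs j).PosDef)
    (hD : ∀ j t, gj j (xs t) ≠ 0) :
    ∑ j, (gj j x) ^ 2 *
        (kj j x x - kvec kj xs j x ⬝ᵥ ((Kmat kj sj xs j)⁻¹ *ᵥ kvec kj xs j x)) ≤
    kComp kj gj x x -
      kvecComp kj gj xs x ⬝ᵥ ((KmatComp kj gj sj xs)⁻¹ *ᵥ kvecComp kj gj xs x) := by
  set A := fun j => (Dmat gj xs j)ᵀ * Kmat kj sj xs j * Dmat gj xs j
  set z := fun j => zvec kj gj xs j x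
  calc _ = kComp kj gj x x - ∑ j, z j ⬝ᵥ ((A j)⁻¹ *ᵥ z j) := by
        rw [kComp_self, ← Finset.sum_sub_distrib]
        exact Finset.sum_congr rfl fun j _ => by
          rw [dotProduct_zvec_inv_mulVec kj gj sj xs (hD j)]; ring
    _ ≤ kComp kj gj x x - (∑ j, z j) ⬝ᵥ ((∑ j, A j)⁻¹ *ᵥ ∑ j, z j) :=
        sub_le_sub_left (dotProduct_sum_inv_mulVec_le _
          (fun j _ => posDef_transpose_Dmat_mul_Kmat_mul_Dmat kj gj sj xs (hK j) (hD j)) z) _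
    _ = _ := by rw [KmatComp_eq_sum, kvecComp_eq_sum]

/-- Theorem (decomposed GP regression has smaller variance): if each `K_{j,T}`
is positive definite and each `D_j` is invertible (`g_j(x_t) ≠ 0`), then
`σ²_{T,decomp}(x) ≤ σ²_{T,entire}(x)`, i.e.
`∑ j, g_j(x)² (k_j(x,x) − k_{j,T}(x)ᵀ K_{j,T}⁻¹ k_{j,T}(x))
  ≤ k(x,x) − k_T(x)ᵀ K_T⁻¹ k_T(x)`. -/
theorem decomposed_gp_variance_le_entire {X : Type*} {T J : ℕ}
    (kj : Fin J → X → X → ℝ) (gj : Fin J → X → ℝ) (sj : Fin J → X → ℝ)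
    (hsym : ∀ j x x', kj j x x' = kj j x' x)
    (xs : Fin T → X) (x : X)
    (hK : ∀ j, (Kmat kj sj xs j).PosDef)
    (hD : ∀ j t, gj j (xs t) ≠ 0) :
    ∑ j, (gj j x) ^ 2 *
        (kj j x x - kvec kj xs j x ⬝ᵥ ((Kmat kj sj xs j)⁻¹ *ᵥ kvec kj xs j x)) ≤
    kComp kj gj x x -
      kvecComp kj gj xs x ⬝ᵥ ((KmatComp kj gj sj xs)⁻¹ *ᵥ kvecComp kj gj xs x) :=
  decomposed_gp_variance_le_entire_general kj gj sj xs x hK hD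
end

section
/- (Lemma: per-step regret bound from valid confidence bounds.) Let 𝒳 be a finite nonempty set, let f, μ, σ : 𝒳 → ℝ and β ≥ 0. Suppose |f(x) − μ(x)| ≤ √β · σ(x) for all x ∈ 𝒳, and let x_t ∈ 𝒳 be a maximizer of x ↦ μ(x) + √β · σ(x) over 𝒳. Then for every x* ∈ 𝒳, the instantaneous regret satisfies f(x*) − f(x_t) ≤ 2√β · σ(x_t). -/
open Real

theorem ucb_per_step_regret_general {𝒳 : Type*}
    (f μ σ : 𝒳 → ℝ) (β : ℝ)
    (hconf : ∀ x, |f x - μ x| ≤ Real.sqrt β * σ x)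
    (xt : 𝒳) (hmax : ∀ x, μ x + Real.sqrt β * σ x ≤ μ xt + Real.sqrt β * σ xt) :
    ∀ xstar : 𝒳, f xstar - f xt ≤ 2 * Real.sqrt β * σ xt := by
  intro xstar
  have hupper : f xstar ≤ μ xstar + √β * σ xstar := by linarith [(abs_le.mp (hconf xstar)).2]
  have hlower : μ xt - √β * σ xt ≤ f xt := by linarith [(abs_le.mp (hconf xt)).1]
  linarith [hmax xstar]

/-- Per-step regret bound from valid confidence bounds: if
`|f(x) − μ(x)| ≤ √β σ(x)` for all `x` and `x_t` maximizes the UCB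
`μ(x) + √β σ(x)`, then `f(x*) − f(x_t) ≤ 2 √β σ(x_t)` for every `x*`. -/
theorem ucb_per_step_regret {𝒳 : Type*} [Fintype 𝒳] [Nonempty 𝒳]
    (f μ σ : 𝒳 → ℝ) (β : ℝ) (hβ : 0 ≤ β)
    (hconf : ∀ x, |f x - μ x| ≤ Real.sqrt β * σ x)
    (xt : 𝒳) (hmax : ∀ x, μ x + Real.sqrt β * σ x ≤ μ xt + Real.sqrt β * σ xt) :
    ∀ xstar : 𝒳, f xstar - f xt ≤ 2 * Real.sqrt β * σ xt :=
  ucb_per_step_regret_general f μ σ β hconf xt hmax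
end

section
/- (Deterministic core of the generalized confidence lemma.) Let g : ℝ^J → ℝ be differentiable with |∂g/∂u_j(u)| ≤ B_j for all u ∈ ℝ^J and all j, where B_j ≥ 0. Let β ≥ 0 and let f_j, μ_j ∈ ℝ and σ_j ≥ 0 for j = 1,…,J satisfy |f_j − μ_j| ≤ √β · σ_j for every j. Then |g(f_1,…,f_J) − g(μ_1,…,μ_J)| ≤ √β · √( J · ∑_{j=1}^J B_j² σ_j² ). -/
open BigOperators Real

/-!
By the mean value theorem, `g f - g μ` is the derivative of `g` at some point of the segment
`[μ, f]` applied to `f - μ`; expanding `f - μ` in the coordinate basis bounds it by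
`∑ j, B j * |f j - μ j| ≤ √β * ∑ j, B j * σ j`, and Cauchy–Schwarz bounds the last sum by
`√(J * ∑ j, B j ^ 2 * σ j ^ 2)`.
-/

section

variable {ι : Type*} [Fintype ι] [DecidableEq ι]

theorem ContinuousLinearMap.abs_apply_le_sum_mul_abs (L : (ι → ℝ) →L[ℝ] ℝ) {B : ι → ℝ}
    (hL : ∀ j, |L (Pi.single j 1)| ≤ B j) (v : ι → ℝ) :
    |L v| ≤ ∑ j, B j * |v j| := by
  have hv : v = ∑ j, v j • Pi.single j (1 : ℝ) := by
    simp only [← Pi.single_smul', smul_eq_mul, mul_one, Finset.univ_sum_single]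
  calc |L v| = |∑ j, v j * L (Pi.single j 1)| := by
        conv_lhs => rw [hv]
        simp only [map_sum, map_smul, smul_eq_mul]
    _ ≤ ∑ j, |v j| * |L (Pi.single j 1)| := by
        simpa only [abs_mul] using Finset.abs_sum_le_sum_abs (fun j => v j * L (Pi.single j 1)) Finset.univ
    _ ≤ ∑ j, B j * |v j| := Finset.sum_le_sum fun j _ => by
        rw [mul_comm]; exact mul_le_mul_of_nonneg_right (hL j) (abs_nonneg _)

theorem abs_sub_le_sum_mul_abs_of_abs_fderiv_single_le {g : (ι → ℝ) → ℝ}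
    (hg : Differentiable ℝ g) {B : ι → ℝ}
    (hB : ∀ u j, |fderiv ℝ g u (Pi.single j 1)| ≤ B j) (x y : ι → ℝ) :
    |g x - g y| ≤ ∑ j, B j * |x j - y j| := by
  obtain ⟨z, -, hz⟩ := domain_mvt (fun u _ => (hg u).hasFDerivAt.hasFDerivWithinAt)
    convex_univ (Set.mem_univ y) (Set.mem_univ x)
  rw [hz]
  exact (fderiv ℝ g z).abs_apply_le_sum_mul_abs (hB z) (x - y)

end

theorem Finset.sum_le_sqrt_card_mul_sum_sq {ι : Type*} (s : Finset ι) (f : ι → ℝ) :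
    ∑ i ∈ s, f i ≤ √(s.card * ∑ i ∈ s, f i ^ 2) :=
  (le_abs_self _).trans (Real.abs_le_sqrt (sq_sum_le_card_mul_sum_sq))

theorem generalized_confidence_core_general {J : ℕ}
    (g : (Fin J → ℝ) → ℝ) (hg : Differentiable ℝ g)
    (B : Fin J → ℝ)
    (hbound : ∀ (u : Fin J → ℝ) (j : Fin J), |fderiv ℝ g u (Pi.single j 1)| ≤ B j)
    (β : ℝ)
    (f μ σ : Fin J → ℝ)
    (hconf : ∀ j, |f j - μ j| ≤ Real.sqrt β * σ j) :
    |g f - g μ| ≤ Real.sqrt β * Real.sqrt ((J : ℝ) * ∑ j, (B j) ^ 2 * (σ j) ^ 2) := by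
  have hB : ∀ j, 0 ≤ B j := fun j => (abs_nonneg _).trans (hbound 0 j)
  calc |g f - g μ| ≤ ∑ j, B j * |f j - μ j| :=
        abs_sub_le_sum_mul_abs_of_abs_fderiv_single_le hg hbound f μ
    _ ≤ ∑ j, √β * (B j * σ j) := Finset.sum_le_sum fun j _ =>
        (mul_le_mul_of_nonneg_left (hconf j) (hB j)).trans_eq (by ring)
    _ = √β * ∑ j, B j * σ j := (Finset.mul_sum _ _ _).symm
    _ ≤ √β * √(J * ∑ j, B j ^ 2 * σ j ^ 2) := by
        gcongr
        simpa only [mul_pow, Finset.card_univ, Fintype.card_fin] using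
          Finset.univ.sum_le_sqrt_card_mul_sum_sq fun j => B j * σ j

/-- Deterministic core of the generalized confidence lemma: if `g : ℝ^J → ℝ`
is differentiable with bounded partial derivatives `|∂g/∂u_j| ≤ B_j`, and
`|f_j − μ_j| ≤ √β σ_j` for every `j`, then
`|g(f) − g(μ)| ≤ √β √(J ∑ j, B_j² σ_j²)`. -/
theorem generalized_confidence_core {J : ℕ}
    (g : (Fin J → ℝ) → ℝ) (hg : Differentiable ℝ g)
    (B : Fin J → ℝ) (hB : ∀ j, 0 ≤ B j)
    (hbound : ∀ (u : Fin J → ℝ) (j : Fin J), |fderiv ℝ g u (Pi.single j 1)| ≤ B j)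
    (β : ℝ) (hβ : 0 ≤ β)
    (f μ σ : Fin J → ℝ) (hσ : ∀ j, 0 ≤ σ j)
    (hconf : ∀ j, |f j - μ j| ≤ Real.sqrt β * σ j) :
    |g f - g μ| ≤ Real.sqrt β * Real.sqrt ((J : ℝ) * ∑ j, (B j) ^ 2 * (σ j) ^ 2) :=
  generalized_confidence_core_general g hg B hbound β f μ σ hconf
end

section
/- (Deterministic regret chain in the proof of the D-GPUCB regret bound.) Let σ > 0 and set C₁ = 8 / log(1 + σ^{−2}). Let T ≥ 1, J ≥ 1, and for t = 1,…,T and j = 1,…,J let r_t ≥ 0, β_t > 0, w_{j,t} ∈ ℝ and s_{j,t} ∈ ℝ satisfy: (i) r_t² ≤ 4 β_t ∑_{j=1}^J w_{j,t}² s_{j,t}² for every t; (ii) 0 ≤ s_{j,t}² ≤ 1 for all j, t; (iii) |w_{j,t}| ≤ B_j for all j, t, with constants B_j ≥ 0; (iv) β_t ≤ β_T for every t ≤ T. Then the cumulative regret R_T = ∑_{t=1}^T r_t satisfies R_T² ≤ C₁ · T · β_T · ∑_{j=1}^J B_j² · ( (1/2) ∑_{t=1}^T log(1 + σ^{−2}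 s_{j,t}²) ). -/
open Real Finset

/-!
Each round's squared regret is at most `4 β_T ∑ⱼ Bⱼ² sⱼ,ₜ²`. Concavity of `log` (Bernoulli's
inequality) gives `x ≤ log (1 + a x) / log (1 + a)` on `[0, 1]`, which turns every `sⱼ,ₜ²` into
its information-gain term `log (1 + σ⁻² sⱼ,ₜ²) / log (1 + σ⁻²)`. Summing over the rounds and
applying Cauchy–Schwarz, `R_T² ≤ T ∑ₜ rₜ²`, gives the bound.
-/

lemma mul_log_one_add_le_log_one_add_mul {a x : ℝ} (ha : -1 < a) (hx₀ : 0 ≤ x) (hx₁ : x ≤ 1) :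
    x * log (1 + a) ≤ log (1 + a * x) := by
  rw [← Real.log_rpow (by linarith), mul_comm a]
  exact Real.log_le_log (Real.rpow_pos_of_pos (by linarith) x)
    (rpow_one_add_le_one_add_mul_self ha.le hx₀ hx₁)

lemma le_log_one_add_mul_div_log_one_add {a x : ℝ} (ha : 0 < a) (hx₀ : 0 ≤ x) (hx₁ : x ≤ 1) :
    x ≤ log (1 + a * x) / log (1 + a) := by
  rw [le_div_iff₀ (Real.log_pos (by linarith))]
  exact mul_log_one_add_le_log_one_add_mul (by linarith) hx₀ hx₁

lemma sq_regret_le_of_ucb_bound {ι : Type*} (J : Finset ι) {a ρ β β' : ℝ}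
    {w s B : ι → ℝ} (ha : 0 < a) (hβ' : 0 ≤ β') (hββ' : β ≤ β')
    (hρ : ρ ^ 2 ≤ 4 * β * ∑ j ∈ J, w j ^ 2 * s j ^ 2)
    (hs : ∀ j ∈ J, s j ^ 2 ≤ 1) (hw : ∀ j ∈ J, |w j| ≤ B j) :
    ρ ^ 2 ≤ 4 * β' * ∑ j ∈ J, B j ^ 2 * (log (1 + a * s j ^ 2) / log (1 + a)) := by
  have hterm : ∀ j ∈ J,
      w j ^ 2 * s j ^ 2 ≤ B j ^ 2 * (log (1 + a * s j ^ 2) / log (1 + a)) := by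
    intro j hj
    have hwB : w j ^ 2 ≤ B j ^ 2 := sq_le_sq.2 ((hw j hj).trans (le_abs_self _))
    exact mul_le_mul hwB (le_log_one_add_mul_div_log_one_add ha (sq_nonneg _) (hs j hj))
      (sq_nonneg _) (sq_nonneg _)
  have hsum : 0 ≤ ∑ j ∈ J, w j ^ 2 * s j ^ 2 := by positivity
  calc ρ ^ 2 ≤ 4 * β * ∑ j ∈ J, w j ^ 2 * s j ^ 2 := hρ
    _ ≤ 4 * β' * ∑ j ∈ J, w j ^ 2 * s j ^ 2 := by gcongr
    _ ≤ _ := mul_le_mul_of_nonneg_left (sum_le_sum hterm) (by positivity)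

theorem dgpucb_regret_chain_general (σ : ℝ) (hσ : 0 < σ)
    (T J : ℕ)
    (r : ℕ → ℝ) (β : ℕ → ℝ) (w s : ℕ → ℕ → ℝ) (B : ℕ → ℝ)
    (hβpos : ∀ t ∈ Finset.Icc 1 T, 0 < β t)
    (h1 : ∀ t ∈ Finset.Icc 1 T,
      r t ^ 2 ≤ 4 * β t * ∑ j ∈ Finset.Icc 1 J, (w j t) ^ 2 * (s j t) ^ 2)
    (h2 : ∀ j ∈ Finset.Icc 1 J, ∀ t ∈ Finset.Icc 1 T, (s j t) ^ 2 ≤ 1)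
    (h3 : ∀ j ∈ Finset.Icc 1 J, ∀ t ∈ Finset.Icc 1 T, |w j t| ≤ B j)
    (h4 : ∀ t ∈ Finset.Icc 1 T, β t ≤ β T) :
    (∑ t ∈ Finset.Icc 1 T, r t) ^ 2 ≤
      (8 / Real.log (1 + σ⁻¹ ^ 2)) * (T : ℝ) * β T *
        ∑ j ∈ Finset.Icc 1 J, (B j) ^ 2 *
          ((1 / 2) * ∑ t ∈ Finset.Icc 1 T, Real.log (1 + σ⁻¹ ^ 2 * (s j t) ^ 2)) := by
  set a := σ⁻¹ ^ 2
  have hround : ∀ t ∈ Icc 1 T, r t ^ 2 ≤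
      4 * β T * ∑ j ∈ Icc 1 J, B j ^ 2 * (log (1 + a * s j t ^ 2) / log (1 + a)) :=
    fun t ht ↦ sq_regret_le_of_ucb_bound _ (by positivity) ((hβpos t ht).le.trans (h4 t ht))
      (h4 t ht) (h1 t ht) (fun j hj ↦ h2 j hj t ht) (fun j hj ↦ h3 j hj t ht)
  calc (∑ t ∈ Icc 1 T, r t) ^ 2 ≤ (T : ℝ) * ∑ t ∈ Icc 1 T, r t ^ 2 := by
        simpa using sq_sum_le_card_mul_sum_sq (s := Icc 1 T) (f := r)
    _ ≤ T * ∑ t ∈ Icc 1 T,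
          4 * β T * ∑ j ∈ Icc 1 J, B j ^ 2 * (log (1 + a * s j t ^ 2) / log (1 + a)) := by
        gcongr with t ht; exact hround t ht
    _ = _ := by
        simp_rw [mul_sum]
        rw [sum_comm]
        refine sum_congr rfl fun j _ ↦ sum_congr rfl fun t _ ↦ ?_
        ring

/-- Deterministic regret chain in the proof of the D-GPUCB regret bound:
under the per-round conditions (i)–(iv), the cumulative regret
`R_T = ∑ t, r_t` satisfies
`R_T² ≤ C₁ T β_T ∑ j, B_j² ((1/2) ∑ t, log(1 + σ⁻² s_{j,t}²))`
with `C₁ = 8 / log(1 + σ⁻²)`. -/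
theorem dgpucb_regret_chain (σ : ℝ) (hσ : 0 < σ)
    (T J : ℕ) (hT : 1 ≤ T) (hJ : 1 ≤ J)
    (r : ℕ → ℝ) (β : ℕ → ℝ) (w s : ℕ → ℕ → ℝ) (B : ℕ → ℝ)
    (hr : ∀ t ∈ Finset.Icc 1 T, 0 ≤ r t)
    (hβpos : ∀ t ∈ Finset.Icc 1 T, 0 < β t)
    (hB : ∀ j ∈ Finset.Icc 1 J, 0 ≤ B j)
    (h1 : ∀ t ∈ Finset.Icc 1 T,
      r t ^ 2 ≤ 4 * β t * ∑ j ∈ Finset.Icc 1 J, (w j t) ^ 2 * (s j t) ^ 2)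
    (h2 : ∀ j ∈ Finset.Icc 1 J, ∀ t ∈ Finset.Icc 1 T, (s j t) ^ 2 ≤ 1)
    (h3 : ∀ j ∈ Finset.Icc 1 J, ∀ t ∈ Finset.Icc 1 T, |w j t| ≤ B j)
    (h4 : ∀ t ∈ Finset.Icc 1 T, β t ≤ β T) :
    (∑ t ∈ Finset.Icc 1 T, r t) ^ 2 ≤
      (8 / Real.log (1 + σ⁻¹ ^ 2)) * (T : ℝ) * β T *
        ∑ j ∈ Finset.Icc 1 J, (B j) ^ 2 *
          ((1 / 2) * ∑ t ∈ Finset.Icc 1 T, Real.log (1 + σ⁻¹ ^ 2 * (s j t) ^ 2)) :=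
  dgpucb_regret_chain_general σ hσ T J r β w s B hβpos h1 h2 h3 h4
end
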